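/- arXiv:1403.6730 — 2 statements merged into one kernel-verified Lean document; each statement's English description precedes it below -/
import Mathlib

section
/- For all multiples of four m, n ≥ 4, the m×n rectangle may be tiled by T-tetrominoes alone. -/
/-- The four rotations of the T-tetromino, as sets of cells (row, col). -/
def tShapes : Finset (Finset (ℤ × ℤ)) :=
  { {(0,0),(0,1),(0,2),(1,1)},
    {(0,0),(0,1),(0,2),(-1,1)},
    {(0,0),(1,0),(2,0),(1,1)},
    {(0,0),(1,0),(2,0),(1,-1)} }

/-- A placed T-tetromino: a translate of one of the four rotations. -/
def IsTPlacement (p : Finset (ℤ × ℤ)) : Prop :=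
  ∃ s ∈ tShapes, ∃ t : ℤ × ℤ, p = s.image (· + t)

/-- The m×n rectangle of cells. -/
noncomputable def rectCells (m n : ℕ) : Finset (ℤ × ℤ) :=
  (Finset.Ico 0 (m:ℤ)) ×ˢ (Finset.Ico 0 (n:ℤ))

/-- A tiling of a region `R` by T-tetrominoes and single-cell monominoes. -/
def IsTiling (P : Finset (Finset (ℤ × ℤ))) (R : Finset (ℤ × ℤ)) : Prop :=
  (∀ p ∈ P, IsTPlacement p ∨ ∃ c, p = {c}) ∧
  (∀ p ∈ P, ∀ q ∈ P, p ≠ q → Disjoint p q) ∧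
  P.biUnion id = R

/-- A tiling of a region `R` by T-tetrominoes alone. -/
def IsTTiling (P : Finset (Finset (ℤ × ℤ))) (R : Finset (ℤ × ℤ)) : Prop :=
  (∀ p ∈ P, IsTPlacement p) ∧
  (∀ p ∈ P, ∀ q ∈ P, p ≠ q → Disjoint p q) ∧
  P.biUnion id = R

/-- The number of monominoes (single-cell pieces) used in a tiling. -/
def monoCount (P : Finset (Finset (ℤ × ℤ))) : ℕ :=
  (P.filter (fun p => p.card = 1)).card

/-- The gap number `M(m,n)`: the least number of monominoes in a tiling of the
m×n rectangle by T-tetrominoes and monominoes. -/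
noncomputable def gapNumber (m n : ℕ) : ℕ :=
  sInf {g | ∃ P, IsTiling P (rectCells m n) ∧ monoCount P = g}

/-! Four T-tetrominoes tile the 4×4 square, and a `4k × 4l` rectangle is a disjoint union of
`k l` translates of that square, each tiled by the translated square tiling. -/

lemma IsTPlacement.image_add {p : Finset (ℤ × ℤ)} (hp : IsTPlacement p) (t : ℤ × ℤ) :
    IsTPlacement (p.image (· + t)) := by
  obtain ⟨s, hs, t₀, rfl⟩ := hp
  refine ⟨s, hs, t₀ + t, ?_⟩
  rw [Finset.image_image]
  exact Finset.image_congr fun c _ => by simp [add_assoc]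

lemma IsTTiling.image_add {P : Finset (Finset (ℤ × ℤ))} {R : Finset (ℤ × ℤ)}
    (h : IsTTiling P R) (t : ℤ × ℤ) :
    IsTTiling (P.image (·.image (· + t))) (R.image (· + t)) := by
  obtain ⟨hplace, hdisj, hcover⟩ := h
  have hinj : Function.Injective (· + t : ℤ × ℤ → ℤ × ℤ) := add_left_injective t
  refine ⟨?_, ?_, ?_⟩
  · simp only [Finset.forall_mem_image]
    exact fun p hp => (hplace p hp).image_add t
  · simp only [Finset.forall_mem_image]
    intro p hp q hq hpq
    exact (Finset.disjoint_image hinj).mpr (hdisj p hp q hq fun h => hpq (h ▸ rfl))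
  · rw [← hcover, Finset.image_biUnion, Finset.biUnion_image]
    rfl

lemma IsTTiling.biUnion {ι : Type*} {I : Finset ι} {P : ι → Finset (Finset (ℤ × ℤ))}
    {R : ι → Finset (ℤ × ℤ)} (h : ∀ i ∈ I, IsTTiling (P i) (R i))
    (hR : Set.PairwiseDisjoint ↑I R) :
    IsTTiling (I.biUnion P) (I.biUnion R) := by
  have hsub : ∀ i ∈ I, ∀ p ∈ P i, p ⊆ R i := fun i hi p hp =>
    (h i hi).2.2 ▸ Finset.subset_biUnion_of_mem id hp
  refine ⟨?_, ?_, ?_⟩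
  · simp only [Finset.mem_biUnion]
    rintro p ⟨i, hi, hp⟩
    exact (h i hi).1 p hp
  · simp only [Finset.mem_biUnion]
    rintro p ⟨i, hi, hp⟩ q ⟨j, hj, hq⟩ hpq
    by_cases hij : i = j
    · subst hij
      exact (h i hi).2.1 p hp q hq hpq
    · exact (hR hi hj hij).mono (hsub i hi p hp) (hsub j hj q hq)
  · rw [Finset.biUnion_biUnion]
    exact Finset.biUnion_congr rfl fun i hi => (h i hi).2.2

lemma Int.eq_of_mul_le_lt_mul_add {a i j x : ℤ} (hi : a * i ≤ x) (hi' : x < a * i + a)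
    (hj : a * j ≤ x) (hj' : x < a * j + a) : i = j := by
  have ha : 0 ≤ a := by linarith
  have h₁ : i < j + 1 := lt_of_mul_lt_mul_left (by linarith) ha
  have h₂ : j < i + 1 := lt_of_mul_lt_mul_left (by linarith) ha
  omega

lemma Int.exists_mul_le_lt_mul_add {a k : ℕ} {x : ℤ} (ha : 0 < a) (hx : 0 ≤ x)
    (hx' : x < a * k) :
    ∃ i < k, (a * i : ℤ) ≤ x ∧ x < a * i + a := by
  lift x to ℕ using hx
  refine ⟨x / a, Nat.div_lt_of_lt_mul (by exact_mod_cast hx'), ?_, ?_⟩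
  · exact_mod_cast Nat.mul_div_le x a
  · have := Nat.lt_mul_div_succ x ha
    push_cast
    rw [← mul_add_one]
    exact_mod_cast this

lemma mem_rectCells_image_add {a b : ℕ} {t x : ℤ × ℤ} :
    x ∈ (rectCells a b).image (· + t) ↔
      t.1 ≤ x.1 ∧ x.1 < t.1 + a ∧ t.2 ≤ x.2 ∧ x.2 < t.2 + b := by
  simp only [rectCells, Finset.mem_image, Finset.mem_product, Finset.mem_Ico]
  constructor
  · rintro ⟨c, hc, rfl⟩
    simp only [Prod.fst_add, Prod.snd_add]
    omega
  · intro hx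
    exact ⟨x - t, by simp only [Prod.fst_sub, Prod.snd_sub]; omega, sub_add_cancel x t⟩

noncomputable def rectBlock (a b : ℕ) (ij : ℕ × ℕ) : Finset (ℤ × ℤ) :=
  (rectCells a b).image (· + ((a * ij.1 : ℤ), (b * ij.2 : ℤ)))

lemma rectCells_mul_eq_biUnion_rectBlock (a b k l : ℕ) (ha : 0 < a) (hb : 0 < b) :
    rectCells (a * k) (b * l) = (Finset.range k ×ˢ Finset.range l).biUnion (rectBlock a b) := by
  ext x
  simp only [Finset.mem_biUnion, Finset.mem_product, Finset.mem_range, rectBlock,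
    mem_rectCells_image_add]
  simp only [rectCells, Finset.mem_product, Finset.mem_Ico]
  constructor
  · rintro ⟨⟨hx₁, hx₁'⟩, hx₂, hx₂'⟩
    obtain ⟨i, hi, hxi⟩ := Int.exists_mul_le_lt_mul_add ha hx₁ (by exact_mod_cast hx₁')
    obtain ⟨j, hj, hxj⟩ := Int.exists_mul_le_lt_mul_add hb hx₂ (by exact_mod_cast hx₂')
    exact ⟨(i, j), ⟨hi, hj⟩, hxi.1, hxi.2, hxj.1, hxj.2⟩
  · rintro ⟨⟨i, j⟩, ⟨hi, hj⟩, h⟩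
    simp only at h
    push_cast
    refine ⟨⟨by nlinarith, by nlinarith⟩, by nlinarith, by nlinarith⟩

lemma pairwiseDisjoint_rectBlock (a b : ℕ) (s : Set (ℕ × ℕ)) :
    s.PairwiseDisjoint (rectBlock a b) := by
  rintro ⟨i, j⟩ - ⟨i', j'⟩ - hne
  refine Finset.disjoint_left.mpr fun x hx hx' => hne ?_
  simp only [rectBlock, mem_rectCells_image_add] at hx hx'
  obtain ⟨hx₁, hx₂, hx₃, hx₄⟩ := hx
  obtain ⟨hx₁', hx₂', hx₃', hx₄'⟩ := hx'
  have hi := Int.eq_of_mul_le_lt_mul_add hx₁ hx₂ hx₁' hx₂'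
  have hj := Int.eq_of_mul_le_lt_mul_add hx₃ hx₄ hx₃' hx₄'
  simp only [Prod.mk.injEq]
  exact ⟨by exact_mod_cast hi, by exact_mod_cast hj⟩

/- Rows 0 to 3 of the tiling, one letter per piece:
  A A A B
  C A B B
  C C D B
  C D D D -/
def squareTiles : Finset (Finset (ℤ × ℤ)) :=
  { {(0,0),(0,1),(0,2),(1,1)},
    {(0,3),(1,2),(1,3),(2,3)},
    {(1,0),(2,0),(3,0),(2,1)},
    {(2,2),(3,1),(3,2),(3,3)} }

lemma isTTiling_squareTiles : IsTTiling squareTiles (rectCells 4 4) := by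
  refine ⟨?_, by decide, by decide⟩
  intro p hp
  fin_cases hp
  · exact ⟨{(0,0),(0,1),(0,2),(1,1)}, by decide, (0,0), by decide⟩
  · exact ⟨{(0,0),(1,0),(2,0),(1,-1)}, by decide, (0,3), by decide⟩
  · exact ⟨{(0,0),(1,0),(2,0),(1,1)}, by decide, (1,0), by decide⟩
  · exact ⟨{(0,0),(0,1),(0,2),(-1,1)}, by decide, (3,1), by decide⟩

lemma IsTTiling.exists_rectCells_mul {P : Finset (Finset (ℤ × ℤ))} {a b : ℕ}
    (h : IsTTiling P (rectCells a b)) (ha : 0 < a) (hb : 0 < b) (k l : ℕ) :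
    ∃ Q, IsTTiling Q (rectCells (a * k) (b * l)) := by
  rw [rectCells_mul_eq_biUnion_rectBlock a b k l ha hb]
  exact ⟨_, IsTTiling.biUnion (fun ij _ => h.image_add _) (pairwiseDisjoint_rectBlock a b _)⟩

theorem walkup_converse_general (m n : ℕ)
    (hm4 : m % 4 = 0) (hn4 : n % 4 = 0) :
    ∃ P : Finset (Finset (ℤ × ℤ)), IsTTiling P (rectCells m n) := by
  obtain ⟨k, rfl⟩ := Nat.dvd_of_mod_eq_zero hm4
  obtain ⟨l, rfl⟩ := Nat.dvd_of_mod_eq_zero hn4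
  exact isTTiling_squareTiles.exists_rectCells_mul (by norm_num) (by norm_num) k l

/-- Every m×n rectangle with both sides multiples of 4 (and ≥ 4) can be tiled
by T-tetrominoes alone. -/
theorem walkup_converse (m n : ℕ) (hm : 4 ≤ m) (hn : 4 ≤ n)
    (hm4 : m % 4 = 0) (hn4 : n % 4 = 0) :
    ∃ P : Finset (Finset (ℤ × ℤ)), IsTTiling P (rectCells m n) :=
  walkup_converse_general m n hm4 hn4
end

section
/- M(3,n) is unbounded as n → ∞; in fact M(3,n) ≥ n/3 − 1 for all n, so sup over all rectangles of the minimum number of monominoes needed is infinite. -/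
/-!
Give a T-piece weight 2 in each column of the 3 × n strip that it fills and weight 1 in each
column that it merely meets. Every piece has total weight at least 3: a horizontal piece meets
three columns, a vertical one fills a column and meets a neighbouring one. Every column carries
total weight at most 2: a piece filling it excludes all others, and three pieces cannot meet it,
since each would meet it in a single cell, which forces the piece to contain the middle-row cell
just left or right of the column, and two of the three would then overlap. Hence `3 T ≤ 2 n` for
the number `T` of T-pieces, and the area count `4 T + M = 3 n` gives `n ≤ 3 M`.
-/

@[simp]
lemma mem_rectCells {m n : ℕ} {c : ℤ × ℤ} :
    c ∈ rectCells m n ↔ (0 ≤ c.1 ∧ c.1 < m) ∧ (0 ≤ c.2 ∧ c.2 < n) := by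
  simp [rectCells, Finset.mem_product]

lemma IsTPlacement.card_eq {p : Finset (ℤ × ℤ)} (hp : IsTPlacement p) : p.card = 4 := by
  obtain ⟨s, hs, t, rfl⟩ := hp
  rw [Finset.card_image_of_injective _ (add_left_injective t)]
  simp only [tShapes, Finset.mem_insert, Finset.mem_singleton] at hs
  rcases hs with rfl | rfl | rfl | rfl <;> decide

lemma IsTPlacement.mem_row_one_of_column_subsingleton {p : Finset (ℤ × ℤ)}
    (hp : IsTPlacement p) (hrow : ∀ c ∈ p, 0 ≤ c.1 ∧ c.1 < 3) {i j : ℤ} (hij : (i, j) ∈ p)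
    (honly : ∀ c ∈ p, c.2 = j → c.1 = i) : (1, j - 1) ∈ p ∨ (1, j + 1) ∈ p := by
  obtain ⟨s, hs, ⟨a, b⟩, rfl⟩ := hp
  simp only [tShapes, Finset.mem_insert, Finset.mem_singleton] at hs
  rcases hs with rfl | rfl | rfl | rfl <;>
  · simp only [Finset.image_insert, Finset.image_singleton, Prod.mk_add_mk,
      Finset.forall_mem_insert, Finset.mem_singleton, forall_eq] at hrow hij honly ⊢
    simp only [Finset.mem_insert, Finset.mem_singleton, Prod.mk.injEq] at hij ⊢
    omega

lemma IsTPlacement.horizontal_or_vertical {p : Finset (ℤ × ℤ)}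
    (hp : IsTPlacement p) (hrow : ∀ c ∈ p, 0 ≤ c.1 ∧ c.1 < 3) :
    (∃ i j : ℤ, (i, j) ∈ p ∧ (i, j + 1) ∈ p ∧ (i, j + 2) ∈ p) ∨
    (∃ j k : ℤ, (0, j) ∈ p ∧ (1, j) ∈ p ∧ (2, j) ∈ p ∧ (1, k) ∈ p ∧ k ≠ j) := by
  obtain ⟨s, hs, ⟨a, b⟩, rfl⟩ := hp
  simp only [tShapes, Finset.mem_insert, Finset.mem_singleton] at hs
  rcases hs with rfl | rfl | rfl | rfl <;>
    simp only [Finset.image_insert, Finset.image_singleton, Prod.mk_add_mk,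
      Finset.forall_mem_insert, Finset.mem_singleton, forall_eq] at hrow
  · exact Or.inl ⟨a, b, by simp [add_comm]⟩
  · exact Or.inl ⟨a, b, by simp [add_comm]⟩
  · obtain rfl : a = 0 := by omega
    exact Or.inr ⟨b, b + 1, by simp [add_comm]⟩
  · obtain rfl : a = 0 := by omega
    exact Or.inr ⟨b, b - 1, by simp [add_comm, sub_eq_add_neg]⟩

def colWeight (p : Finset (ℤ × ℤ)) (j : ℤ) : ℕ :=
  if (0, j) ∈ p ∧ (1, j) ∈ p ∧ (2, j) ∈ p then 2 else if ∃ c ∈ p, c.2 = j then 1 else 0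

lemma colWeight_le_two (p : Finset (ℤ × ℤ)) (j : ℤ) : colWeight p j ≤ 2 := by
  unfold colWeight; split_ifs <;> omega

lemma one_le_colWeight {p : Finset (ℤ × ℤ)} {i j : ℤ} (h : (i, j) ∈ p) : 1 ≤ colWeight p j := by
  unfold colWeight; split_ifs with _ hj
  · omega
  · rfl
  · exact absurd ⟨_, h, rfl⟩ hj

lemma colWeight_eq_two {p : Finset (ℤ × ℤ)} {j : ℤ}
    (h0 : (0, j) ∈ p) (h1 : (1, j) ∈ p) (h2 : (2, j) ∈ p) : colWeight p j = 2 :=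
  if_pos ⟨h0, h1, h2⟩

lemma colWeight_eq_zero {p : Finset (ℤ × ℤ)} {j : ℤ} (h : ∀ c ∈ p, c.2 ≠ j) :
    colWeight p j = 0 := by
  rw [colWeight, if_neg fun hfull => h _ hfull.1 rfl, if_neg fun ⟨c, hc, hcj⟩ => h c hc hcj]

lemma IsTPlacement.three_le_sum_colWeight {n : ℕ} {p : Finset (ℤ × ℤ)} (hp : IsTPlacement p)
    (hsub : p ⊆ rectCells 3 n) : 3 ≤ ∑ j ∈ Finset.Ico (0 : ℤ) n, colWeight p j := by
  have hcol : ∀ {i j : ℤ}, (i, j) ∈ p → j ∈ Finset.Ico (0 : ℤ) n := fun h => by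
    simpa using (mem_rectCells.1 (hsub h)).2
  have hrow : ∀ c ∈ p, 0 ≤ c.1 ∧ c.1 < 3 := fun c hc => by
    simpa using (mem_rectCells.1 (hsub hc)).1
  rcases hp.horizontal_or_vertical hrow with ⟨i, j, h0, h1, h2⟩ | ⟨j, k, h0, h1, h2, hk, hkj⟩
  · have hsub : {j, j + 1, j + 2} ⊆ Finset.Ico (0 : ℤ) n := by
      simp only [Finset.insert_subset_iff, Finset.singleton_subset_iff]
      exact ⟨hcol h0, hcol h1, hcol h2⟩
    calc 3 ≤ colWeight p j + colWeight p (j + 1) + colWeight p (j + 2) := by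
          have := one_le_colWeight h0
          have := one_le_colWeight h1
          have := one_le_colWeight h2
          omega
      _ = ∑ j ∈ {j, j + 1, j + 2}, colWeight p j := by
          rw [Finset.sum_insert (by simp), Finset.sum_pair (by simp), add_assoc]
      _ ≤ _ := Finset.sum_le_sum_of_subset hsub
  · calc 3 ≤ colWeight p j + colWeight p k := by
          rw [colWeight_eq_two h0 h1 h2]
          have := one_le_colWeight hk
          omega
      _ ≤ _ := Finset.add_le_sum (fun _ _ => Nat.zero_le _) (hcol h0) (hcol hk) hkj.symm

lemma row_eq_of_disjoint {p q r : Finset (ℤ × ℤ)} (hrow : ∀ c ∈ p, 0 ≤ c.1 ∧ c.1 < 3)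
    (hpq : Disjoint p q) (hpr : Disjoint p r) {a b c j : ℤ} (hb : (b, j) ∈ q) (hc : (c, j) ∈ r)
    (habc : ∀ x : ℤ, 0 ≤ x → x < 3 → x = a ∨ x = b ∨ x = c) :
    ∀ x ∈ p, x.2 = j → x.1 = a := by
  rintro ⟨x, _⟩ hx rfl
  obtain ⟨h0, h3⟩ := hrow _ hx
  rcases habc x h0 h3 with rfl | rfl | rfl
  · rfl
  · exact absurd hb (Finset.disjoint_left.mp hpq hx)
  · exact absurd hc (Finset.disjoint_left.mp hpr hx)

lemma card_filter_meets_column_le_two {TS : Finset (Finset (ℤ × ℤ))}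
    (hT : ∀ p ∈ TS, IsTPlacement p) (hrow : ∀ p ∈ TS, ∀ c ∈ p, 0 ≤ c.1 ∧ c.1 < 3)
    (hdis : (TS : Set (Finset (ℤ × ℤ))).PairwiseDisjoint id) (j : ℤ) :
    (TS.filter fun p => ∃ c ∈ p, c.2 = j).card ≤ 2 := by
  by_contra! h
  obtain ⟨p, hp, q, hq, r, hr, hpq, hpr, hqr⟩ := Finset.two_lt_card.mp h
  simp only [Finset.mem_filter] at hp hq hr
  obtain ⟨hp, ⟨a, _⟩, ha, rfl⟩ := hp
  obtain ⟨hq, ⟨b, _⟩, hb, hbj⟩ := hq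
  obtain ⟨hr, ⟨c, _⟩, hc, hcj⟩ := hr
  subst hbj hcj
  have dpq : Disjoint p q := hdis hp hq hpq
  have dpr : Disjoint p r := hdis hp hr hpr
  have dqr : Disjoint q r := hdis hq hr hqr
  have habc : ∀ x : ℤ, 0 ≤ x → x < 3 → x = a ∨ x = b ∨ x = c := by
    have hab : a ≠ b := by rintro rfl; exact Finset.disjoint_left.mp dpq ha hb
    have hac : a ≠ c := by rintro rfl; exact Finset.disjoint_left.mp dpr ha hc
    have hbc : b ≠ c := by rintro rfl; exact Finset.disjoint_left.mp dqr hb hc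
    obtain ⟨_, _⟩ : 0 ≤ a ∧ a < 3 := hrow p hp _ ha
    obtain ⟨_, _⟩ : 0 ≤ b ∧ b < 3 := hrow q hq _ hb
    obtain ⟨_, _⟩ : 0 ≤ c ∧ c < 3 := hrow r hr _ hc
    omega
  have np := (hT p hp).mem_row_one_of_column_subsingleton (hrow p hp) ha
    (row_eq_of_disjoint (hrow p hp) dpq dpr hb hc habc)
  have nq := (hT q hq).mem_row_one_of_column_subsingleton (hrow q hq) hb
    (row_eq_of_disjoint (hrow q hq) dpq.symm dqr ha hc
      fun x h0 h3 => or_left_comm.1 (habc x h0 h3))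
  have nr := (hT r hr).mem_row_one_of_column_subsingleton (hrow r hr) hc
    (row_eq_of_disjoint (hrow r hr) dpr.symm dqr.symm ha hb
      fun x h0 h3 => (habc x h0 h3).rotate.rotate)
  rcases np with hp' | hp' <;> rcases nq with hq' | hq' <;> rcases nr with hr' | hr' <;>
    first
    | exact Finset.disjoint_left.mp dpq hp' hq'
    | exact Finset.disjoint_left.mp dpr hp' hr'
    | exact Finset.disjoint_left.mp dqr hq' hr'

lemma sum_colWeight_le_two {TS : Finset (Finset (ℤ × ℤ))}
    (hT : ∀ p ∈ TS, IsTPlacement p) (hrow : ∀ p ∈ TS, ∀ c ∈ p, 0 ≤ c.1 ∧ c.1 < 3)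
    (hdis : (TS : Set (Finset (ℤ × ℤ))).PairwiseDisjoint id) (j : ℤ) :
    ∑ p ∈ TS, colWeight p j ≤ 2 := by
  by_cases hfull : ∃ p ∈ TS, (0, j) ∈ p ∧ (1, j) ∈ p ∧ (2, j) ∈ p
  · obtain ⟨p, hp, h0, h1, h2⟩ := hfull
    have hothers : ∀ q ∈ TS, q ≠ p → colWeight q j = 0 := by
      intro q hq hne
      have hmiss : ∀ c ∈ q, c.2 ≠ j := by
        rintro ⟨i, _⟩ hc rfl
        obtain ⟨_, _⟩ : 0 ≤ i ∧ i < 3 := hrow q hq _ hc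
        have hd := Finset.disjoint_left.mp (hdis hq hp hne) hc
        rcases (by omega : i = 0 ∨ i = 1 ∨ i = 2) with rfl | rfl | rfl <;> contradiction
      exact colWeight_eq_zero hmiss
    rw [Finset.sum_eq_single_of_mem p hp hothers]
    exact colWeight_le_two p j
  · calc ∑ p ∈ TS, colWeight p j = ∑ p ∈ TS, if ∃ c ∈ p, c.2 = j then 1 else 0 :=
          Finset.sum_congr rfl fun p hp => if_neg fun h => hfull ⟨p, hp, h⟩
      _ = (TS.filter fun p => ∃ c ∈ p, c.2 = j).card := (Finset.card_filter _ _).symm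
      _ ≤ 2 := card_filter_meets_column_le_two hT hrow hdis j

lemma three_mul_card_le_of_subset_rectCells {n : ℕ} {TS : Finset (Finset (ℤ × ℤ))}
    (hT : ∀ p ∈ TS, IsTPlacement p) (hsub : ∀ p ∈ TS, p ⊆ rectCells 3 n)
    (hdis : (TS : Set (Finset (ℤ × ℤ))).PairwiseDisjoint id) : 3 * TS.card ≤ 2 * n := by
  have hrow : ∀ p ∈ TS, ∀ c ∈ p, 0 ≤ c.1 ∧ c.1 < 3 := fun p hp c hc => by
    simpa using (mem_rectCells.1 (hsub p hp hc)).1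
  calc 3 * TS.card = ∑ _p ∈ TS, 3 := by simp [mul_comm]
    _ ≤ ∑ p ∈ TS, ∑ j ∈ Finset.Ico (0 : ℤ) n, colWeight p j :=
        Finset.sum_le_sum fun p hp => (hT p hp).three_le_sum_colWeight (hsub p hp)
    _ = ∑ j ∈ Finset.Ico (0 : ℤ) n, ∑ p ∈ TS, colWeight p j := Finset.sum_comm
    _ ≤ ∑ _j ∈ Finset.Ico (0 : ℤ) n, 2 :=
        Finset.sum_le_sum fun j _ => sum_colWeight_le_two hT hrow hdis j
    _ = 2 * n := by simp [mul_comm]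

lemma card_rectCells (m n : ℕ) : (rectCells m n).card = m * n := by
  simp [rectCells]

lemma IsTiling.isTPlacement_of_card_ne_one {P : Finset (Finset (ℤ × ℤ))} {R : Finset (ℤ × ℤ)}
    (hP : IsTiling P R) {p : Finset (ℤ × ℤ)} (hp : p ∈ P) (hcard : p.card ≠ 1) :
    IsTPlacement p := by
  rcases hP.1 p hp with h | ⟨c, rfl⟩
  · exact h
  · exact absurd (Finset.card_singleton c) hcard

lemma IsTiling.pairwiseDisjoint {P : Finset (Finset (ℤ × ℤ))} {R : Finset (ℤ × ℤ)}
    (hP : IsTiling P R) : (P : Set (Finset (ℤ × ℤ))).PairwiseDisjoint id :=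
  fun p hp q hq => hP.2.1 p hp q hq

lemma IsTiling.card_eq {P : Finset (Finset (ℤ × ℤ))} {R : Finset (ℤ × ℤ)} (hP : IsTiling P R) :
    R.card = monoCount P + 4 * (P.filter fun p => p.card ≠ 1).card := by
  rw [← hP.2.2, Finset.card_biUnion hP.pairwiseDisjoint,
    ← Finset.sum_filter_add_sum_filter_not P (fun p => p.card = 1), monoCount,
    Finset.card_eq_sum_ones, mul_comm, ← Finset.sum_const_nat]
  · exact congrArg₂ (· + ·) (Finset.sum_congr rfl fun p hp => (Finset.mem_filter.1 hp).2) rfl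
  · intro p hp
    obtain ⟨hpP, hcard⟩ := Finset.mem_filter.1 hp
    exact (hP.isTPlacement_of_card_ne_one hpP hcard).card_eq

lemma le_three_mul_monoCount {n : ℕ} {P : Finset (Finset (ℤ × ℤ))}
    (hP : IsTiling P (rectCells 3 n)) : n ≤ 3 * monoCount P := by
  have hT : ∀ p ∈ P.filter fun p => p.card ≠ 1, IsTPlacement p := fun p hp =>
    hP.isTPlacement_of_card_ne_one (Finset.mem_filter.1 hp).1 (Finset.mem_filter.1 hp).2
  have hsub : ∀ p ∈ P.filter fun p => p.card ≠ 1, p ⊆ rectCells 3 n := fun p hp =>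
    hP.2.2 ▸ Finset.subset_biUnion_of_mem id (Finset.mem_filter.1 hp).1
  have hpieces := three_mul_card_le_of_subset_rectCells hT hsub
    (hP.pairwiseDisjoint.subset (Finset.coe_subset.2 (Finset.filter_subset _ P)))
  have harea := hP.card_eq
  rw [card_rectCells] at harea
  omega

lemma isTiling_image_singleton (R : Finset (ℤ × ℤ)) : IsTiling (R.image singleton) R := by
  refine ⟨?_, ?_, ?_⟩
  · simp only [Finset.mem_image]
    rintro _ ⟨c, _, rfl⟩
    exact Or.inr ⟨c, rfl⟩
  · simp only [Finset.mem_image]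
    rintro _ ⟨c, _, rfl⟩ _ ⟨d, _, rfl⟩ hne
    exact Finset.disjoint_singleton.2 fun h => hne (h ▸ rfl)
  · rw [Finset.image_biUnion]
    exact Finset.biUnion_singleton_eq_self

lemma le_three_mul_gapNumber (n : ℕ) : n ≤ 3 * gapNumber 3 n := by
  obtain ⟨P, hP, hPg⟩ :=
    Nat.sInf_mem (s := {g | ∃ P, IsTiling P (rectCells 3 n) ∧ monoCount P = g})
      ⟨_, _, isTiling_image_singleton _, rfl⟩
  rw [gapNumber, ← hPg]
  exact le_three_mul_monoCount hP

/-- M(3,n) ≥ n/3 − 1 for all n, hence M(3,n) is unbounded as n → ∞. -/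
theorem width3_unbounded :
    (∀ n : ℕ, (n : ℚ) / 3 - 1 ≤ (gapNumber 3 n : ℚ)) ∧
    (∀ B : ℕ, ∃ n : ℕ, B < gapNumber 3 n) := by
  refine ⟨fun n => ?_, fun B => ⟨3 * B + 3, ?_⟩⟩
  · have : (n : ℚ) ≤ 3 * gapNumber 3 n := by exact_mod_cast le_three_mul_gapNumber n
    linarith
  · have := le_three_mul_gapNumber (3 * B + 3)
    omega
end
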